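/- arXiv:1304.4613 — 5 statements merged into one kernel-verified Lean document; each statement's English description precedes it below -/
import Mathlib

section
/- Let Z be a finite set with |Z| = D ≥ 1, let γ > 1 be real, let A be the γ-diagonal matrix on Z, and let 1 ≤ m ≤ n. For all databases z, ż ∈ Z^n that differ in exactly one coordinate (Hamming distance 1) and every output ŵ ∈ Z^m, the output distribution of the sampling-then-PRAM mechanism satisfies P(ŵ | z) ≤ ((n + m(γ − 1))/n) · P(ŵ | ż). Equivalently, the mechanism provides ε-differential privacy with ε = ln((n + m(γ − 1))/n). -/
open Finset

/-- The γ-diagonal PRAM matrix on a finite alphabet `Z`: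
entry `γ/q` on the diagonal and `1/q` off the diagonal, with `q = γ + |Z| - 1`. -/
noncomputable def gammaDiag {Z : Type*} [Fintype Z] [DecidableEq Z] (γ : ℝ) (w z : Z) : ℝ :=
  if w = z then γ / (γ + (Fintype.card Z : ℝ) - 1) else 1 / (γ + (Fintype.card Z : ℝ) - 1)

/-- The set of injective `m`-tuples with entries in `{1,…,n}` (sampling without replacement). -/
def Theta (m n : ℕ) : Finset (Fin m → Fin n) :=
  Finset.univ.filter Function.Injective

/-- The output distribution of the sampling-then-PRAM mechanism:
`m` positions of `z` are sampled uniformly without replacement, and each sampled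
symbol is independently perturbed by the γ-diagonal PRAM matrix. -/
noncomputable def samplePRAM {Z : Type*} [Fintype Z] [DecidableEq Z] (γ : ℝ)
    {m n : ℕ} (what : Fin m → Z) (z : Fin n → Z) : ℝ :=
  (1 / ((Theta m n).card : ℝ)) * ∑ π ∈ Theta m n, ∏ i, gammaDiag γ (what i) (z (π i))

private lemma update_inj {α β : Type*} [DecidableEq α] {π : α → β}
    (hπ : Function.Injective π) (i : α) {k : β} (hk : ∀ l, π l ≠ k) :
    Function.Injective (Function.update π i k) := by
  intro a b hab
  by_cases ha : a = i
  · by_cases hb : b = i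
    · rw [ha, hb]
    · rw [ha, Function.update_self, Function.update_of_ne hb] at hab
      exact absurd hab.symm (hk b)
  · by_cases hb : b = i
    · rw [hb, Function.update_of_ne ha, Function.update_self] at hab
      exact absurd hab (hk a)
    · rw [Function.update_of_ne ha, Function.update_of_ne hb] at hab
      exact hπ hab

set_option maxHeartbeats 1600000

/-- Sampling-then-PRAM provides `ε`-differential privacy with
`ε = ln((n + m(γ-1))/n)`: the likelihood ratio on databases at Hamming
distance 1 is bounded by `(n + m(γ-1))/n`. -/
theorem sampling_pram_differential_privacy
    {Z : Type*} [Fintype Z] [DecidableEq Z] (hD : 1 ≤ Fintype.card Z)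
    (γ : ℝ) (hγ : 1 < γ) (m n : ℕ) (hm : 1 ≤ m) (hmn : m ≤ n)
    (z zdot : Fin n → Z) (hdist : hammingDist z zdot = 1) (what : Fin m → Z) :
    samplePRAM γ what z ≤ (((n : ℝ) + m * (γ - 1)) / n) * samplePRAM γ what zdot := by
  classical
  have hD1 : (1:ℝ) ≤ (Fintype.card Z : ℝ) := by exact_mod_cast hD
  set q : ℝ := γ + (Fintype.card Z : ℝ) - 1 with hqdef
  have hq : 0 < q := by nlinarith
  have hn0 : 0 < n := by omega
  have hn : (0:ℝ) < n := by exact_mod_cast hn0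
  have hm' : (1:ℝ) ≤ (m:ℝ) := by exact_mod_cast hm
  have hmn' : (m:ℝ) ≤ (n:ℝ) := by exact_mod_cast hmn
  set c : ℝ := (((n:ℝ) + m * (γ - 1)) / n) with hcdef
  have hc1 : 1 ≤ c := by
    rw [hcdef, le_div_iff₀ hn]; nlinarith
  have hcγ : c ≤ γ := by
    rw [hcdef, div_le_iff₀ hn]; nlinarith
  -- bounds on the matrix entries
  have gd_ge : ∀ w x : Z, 1 / q ≤ gammaDiag γ w x := by
    intro w x
    simp only [gammaDiag, ← hqdef]
    split <;> rw [div_le_div_iff₀ hq hq] <;> nlinarith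
  have gd_pos : ∀ w x : Z, 0 < gammaDiag γ w x := fun w x =>
    lt_of_lt_of_le (div_pos one_pos hq) (gd_ge w x)
  have gd_cases : ∀ w x : Z, gammaDiag γ w x = γ / q ∨ gammaDiag γ w x = 1 / q := by
    intro w x
    simp only [gammaDiag, ← hqdef]
    split <;> simp
  clear_value q c
  -- extract the differing coordinate
  obtain ⟨j, hjset⟩ := Finset.card_eq_one.mp (by simpa [hammingDist] using hdist)
  have heq : ∀ k, k ≠ j → z k = zdot k := by
    intro k hk
    by_contra h
    have : k ∈ Finset.univ.filter (fun i => z i ≠ zdot i) := by simp [h]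
    rw [hjset] at this
    exact hk (Finset.mem_singleton.mp this)
  -- reduce to the sums
  rw [samplePRAM, samplePRAM, mul_left_comm]
  refine mul_le_mul_of_nonneg_left ?_ (by positivity)
  -- split Theta into hitting/avoiding j
  set Θh : Finset (Fin m → Fin n) := (Theta m n).filter (fun π => ∃ i, π i = j) with hΘh
  set Θa : Finset (Fin m → Fin n) := (Theta m n).filter (fun π => ¬ ∃ i, π i = j) with hΘa
  have hsplit : ∀ x : Fin n → Z,
      ∑ π ∈ Theta m n, ∏ i, gammaDiag γ (what i) (x (π i))
        = (∑ π ∈ Θh, ∏ i, gammaDiag γ (what i) (x (π i)))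
          + ∑ π ∈ Θa, ∏ i, gammaDiag γ (what i) (x (π i)) := fun x =>
    (Finset.sum_filter_add_sum_filter_not _ _ _).symm
  have hNa : ∑ π ∈ Θa, ∏ i, gammaDiag γ (what i) (z (π i))
      = ∑ π ∈ Θa, ∏ i, gammaDiag γ (what i) (zdot (π i)) := by
    refine Finset.sum_congr rfl fun π hπ => Finset.prod_congr rfl fun i _ => ?_
    have hπj : ∀ i, π i ≠ j := by
      have := (Finset.mem_filter.mp hπ).2
      push_neg at this; exact this
    rw [heq _ (hπj i)]
  -- hit pairs
  set Ph : Finset ((Fin m → Fin n) × Fin m) :=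
    ((Theta m n) ×ˢ Finset.univ).filter (fun p => p.1 p.2 = j) with hPh
  have memPh : ∀ p ∈ Ph, Function.Injective p.1 ∧ p.1 p.2 = j := by
    intro p hp
    have h1 := Finset.mem_filter.mp hp
    refine ⟨?_, h1.2⟩
    have h2 := (Finset.mem_product.mp h1.1).1
    simpa [Theta] using h2
  have pair_sum : ∀ F : (Fin m → Fin n) → ℝ,
      ∑ p ∈ Ph, F p.1 = ∑ π ∈ Θh, F π := by
    intro F
    rw [hPh, hΘh, Finset.sum_filter, Finset.sum_filter, Finset.sum_product]
    refine Finset.sum_congr rfl fun π hπ => ?_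
    have hinj : Function.Injective π := by simpa [Theta] using hπ
    by_cases h : ∃ i, π i = j
    · obtain ⟨i0, hi0⟩ := h
      rw [if_pos ⟨i0, hi0⟩]
      have key : ∀ i : Fin m, (if π i = j then F π else 0) = if i = i0 then F π else 0 := by
        intro i
        by_cases hi : π i = j
        · rw [if_pos hi, if_pos (hinj (hi.trans hi0.symm))]
        · rw [if_neg hi, if_neg (fun he => hi (by rw [he]; exact hi0))]
      rw [Finset.sum_congr rfl fun i _ => key i,
        Finset.sum_ite_eq' Finset.univ i0 (fun _ => F π)]
      simp
    · rw [if_neg h]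
      push_neg at h
      simp [h]
  -- the residual product
  set R : (Fin m → Fin n) × Fin m → ℝ :=
    fun p => ∏ l ∈ Finset.univ.erase p.2, gammaDiag γ (what l) (zdot (p.1 l)) with hR
  have hR0 : ∀ p, 0 ≤ R p := fun p => Finset.prod_nonneg fun l _ => (gd_pos _ _).le
  have hdecomp : ∀ x : Fin n → Z, (∀ k, k ≠ j → x k = zdot k) → ∀ p ∈ Ph,
      ∏ i, gammaDiag γ (what i) (x (p.1 i)) = gammaDiag γ (what p.2) (x j) * R p := by
    intro x hx p hp
    obtain ⟨hinj, hpj⟩ := memPh p hp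
    rw [← Finset.mul_prod_erase Finset.univ _ (Finset.mem_univ p.2), hpj]
    congr 1
    refine Finset.prod_congr rfl fun l hl => ?_
    have hl' : l ≠ p.2 := (Finset.mem_erase.mp hl).1
    have hne : p.1 l ≠ j := fun h => hl' (hinj (h.trans hpj.symm))
    rw [hx _ hne]
  set N : ℝ := ∑ π ∈ Θa, ∏ i, gammaDiag γ (what i) (zdot (π i)) with hN
  set T : ℝ := ∑ p ∈ Ph, R p with hT
  clear_value N T
  have hN0 : 0 ≤ N := by
    rw [hN]
    exact Finset.sum_nonneg fun π _ => Finset.prod_nonneg fun i _ => (gd_pos _ _).le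
  -- coefficient bound
  have coeff_bound : ∀ i : Fin m,
      gammaDiag γ (what i) (z j) - c * gammaDiag γ (what i) (zdot j) ≤ (γ - c) / q := by
    intro i
    have hq' : q ≠ 0 := ne_of_gt hq
    rcases gd_cases (what i) (z j) with h1 | h1 <;>
      rcases gd_cases (what i) (zdot j) with h2 | h2 <;>
        rw [h1, h2, le_div_iff₀ hq] <;> field_simp <;> nlinarith
  -- inequality (I)
  have Hz_le : (∑ p ∈ Ph, ∏ i, gammaDiag γ (what i) (z (p.1 i)))
      - c * (∑ p ∈ Ph, ∏ i, gammaDiag γ (what i) (zdot (p.1 i)))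
      ≤ (γ - c) / q * T := by
    rw [Finset.mul_sum, ← Finset.sum_sub_distrib, hT, Finset.mul_sum]
    refine Finset.sum_le_sum fun p hp => ?_
    rw [hdecomp z heq p hp, hdecomp zdot (fun _ _ => rfl) p hp]
    have hb := mul_le_mul_of_nonneg_right (coeff_bound p.2) (hR0 p)
    nlinarith [hb]
  -- cardinality of the complement of the range
  have cardK : ∀ p ∈ Ph, (Finset.univ.filter (fun k => ∀ l, p.1 l ≠ k)).card = n - m := by
    intro p hp
    have hinj := (memPh p hp).1
    have hset : Finset.univ.filter (fun k => ∀ l, p.1 l ≠ k)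
        = Finset.univ \ Finset.univ.image p.1 := by
      ext k
      simp [eq_comm]
    rw [hset, Finset.card_sdiff_of_subset (Finset.subset_univ _), Finset.card_univ,
      Finset.card_image_of_injective _ hinj, Finset.card_univ,
      Fintype.card_fin, Fintype.card_fin]
  -- the bijection between hit-triples and avoid-pairs
  have bij_sum :
      ∑ p ∈ Ph, ∑ k ∈ Finset.univ.filter (fun k => ∀ l, p.1 l ≠ k),
          gammaDiag γ (what p.2) (zdot k) * R p
      = ∑ p ∈ Θa ×ˢ (Finset.univ : Finset (Fin m)),
          ∏ l, gammaDiag γ (what l) (zdot (p.1 l)) := by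
    rw [Finset.sum_sigma' Ph (fun p => Finset.univ.filter (fun k => ∀ l, p.1 l ≠ k))
      (fun p k => gammaDiag γ (what p.2) (zdot k) * R p)]
    refine Finset.sum_nbij' (fun x => (Function.update x.1.1 x.1.2 x.2, x.1.2))
      (fun p => ⟨(Function.update p.1 p.2 j, p.2), p.1 p.2⟩) ?_ ?_ ?_ ?_ ?_
    · rintro ⟨⟨π, i⟩, k⟩ hx
      obtain ⟨hp, hk⟩ := Finset.mem_sigma.mp hx
      obtain ⟨hinj, hpj⟩ := memPh _ hp
      have hk' : ∀ l, π l ≠ k := by simpa using hk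
      dsimp only
      refine Finset.mem_product.mpr ⟨Finset.mem_filter.mpr ⟨?_, ?_⟩, Finset.mem_univ _⟩
      · simp only [Theta, Finset.mem_filter, Finset.mem_univ, true_and]
        exact update_inj hinj i hk'
      · rintro ⟨l, hl⟩
        dsimp only at hl
        by_cases hli : l = i
        · rw [hli, Function.update_self] at hl
          exact hk' i (hpj.trans hl.symm)
        · rw [Function.update_of_ne hli] at hl
          exact hli (hinj (hl.trans hpj.symm))
    · rintro ⟨π, i⟩ hp
      obtain ⟨hpa, -⟩ := Finset.mem_product.mp hp
      obtain ⟨hpt, hnj⟩ := Finset.mem_filter.mp hpa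
      have hinj : Function.Injective π := by simpa [Theta] using hpt
      push_neg at hnj
      dsimp only
      refine Finset.mem_sigma.mpr ⟨?_, ?_⟩
      · refine Finset.mem_filter.mpr ⟨Finset.mem_product.mpr ⟨?_, Finset.mem_univ _⟩, ?_⟩
        · simp only [Theta, Finset.mem_filter, Finset.mem_univ, true_and]
          exact update_inj hinj i hnj
        · exact Function.update_self _ _ _
      · simp only [Finset.mem_filter, Finset.mem_univ, true_and]
        intro l
        by_cases hli : l = i
        · rw [hli, Function.update_self]
          exact fun h => hnj i h.symm
        · rw [Function.update_of_ne hli]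
          exact fun h => hli (hinj h)
    · rintro ⟨⟨π, i⟩, k⟩ hx
      obtain ⟨hp, hk⟩ := Finset.mem_sigma.mp hx
      obtain ⟨hinj, hpj⟩ := memPh _ hp
      simp only [Function.update_self, Function.update_idem]
      rw [← hpj, Function.update_eq_self]
    · rintro ⟨π, i⟩ hp
      simp only [Function.update_idem, Function.update_eq_self]
    · rintro ⟨⟨π, i⟩, k⟩ hx
      obtain ⟨hp, hk⟩ := Finset.mem_sigma.mp hx
      obtain ⟨hinj, hpj⟩ := memPh _ hp
      show gammaDiag γ (what i) (zdot k) * R (π, i)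
        = ∏ l, gammaDiag γ (what l) (zdot (Function.update π i k l))
      rw [← Finset.mul_prod_erase Finset.univ
        (fun l => gammaDiag γ (what l) (zdot (Function.update π i k l))) (Finset.mem_univ i),
        Function.update_self]
      congr 1
      refine Finset.prod_congr rfl fun l hl => ?_
      rw [Function.update_of_ne (Finset.mem_erase.mp hl).1]
  -- inequality (II)
  have rhs_eval : ∑ p ∈ Θa ×ˢ (Finset.univ : Finset (Fin m)),
      ∏ l, gammaDiag γ (what l) (zdot (p.1 l)) = (m:ℝ) * N := by
    rw [Finset.sum_product]
    have hstep : ∀ π ∈ Θa, ∑ _i : Fin m, ∏ l, gammaDiag γ (what l) (zdot (π l))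
        = (m:ℝ) * ∏ l, gammaDiag γ (what l) (zdot (π l)) := by
      intro π _
      rw [Finset.sum_const, Finset.card_univ, Fintype.card_fin, nsmul_eq_mul]
    rw [Finset.sum_congr rfl hstep, ← Finset.mul_sum, hN]
  have T_bound : ((n:ℝ) - m) / q * T ≤ (m:ℝ) * N := by
    have step_b : ((n:ℝ) - m) / q * T
        ≤ ∑ p ∈ Ph, ∑ k ∈ Finset.univ.filter (fun k => ∀ l, p.1 l ≠ k),
            gammaDiag γ (what p.2) (zdot k) * R p := by
      rw [hT, Finset.mul_sum]
      refine Finset.sum_le_sum fun p hp => ?_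
      have hcard := cardK p hp
      calc ((n:ℝ) - m) / q * R p
          = (Finset.univ.filter (fun k => ∀ l, p.1 l ≠ k)).card • (1 / q * R p) := by
            rw [hcard, nsmul_eq_mul, Nat.cast_sub hmn]; ring
        _ ≤ ∑ k ∈ Finset.univ.filter (fun k => ∀ l, p.1 l ≠ k),
              gammaDiag γ (what p.2) (zdot k) * R p :=
            Finset.card_nsmul_le_sum _ _ _ fun k _ =>
              mul_le_mul_of_nonneg_right (gd_ge _ _) (hR0 p)
    calc ((n:ℝ) - m) / q * T
        ≤ ∑ p ∈ Ph, ∑ k ∈ Finset.univ.filter (fun k => ∀ l, p.1 l ≠ k),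
            gammaDiag γ (what p.2) (zdot k) * R p := step_b
      _ = (m:ℝ) * N := by rw [bij_sum, rhs_eval]
  -- combine
  have e1 : ∑ p ∈ Ph, (∏ i, gammaDiag γ (what i) (z (p.1 i)))
      = ∑ π ∈ Θh, ∏ i, gammaDiag γ (what i) (z (π i)) :=
    pair_sum (fun π => ∏ i, gammaDiag γ (what i) (z (π i)))
  have e2 : ∑ p ∈ Ph, (∏ i, gammaDiag γ (what i) (zdot (p.1 i)))
      = ∑ π ∈ Θh, ∏ i, gammaDiag γ (what i) (zdot (π i)) :=
    pair_sum (fun π => ∏ i, gammaDiag γ (what i) (zdot (π i)))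
  set HZ : ℝ := ∑ p ∈ Ph, ∏ i, gammaDiag γ (what i) (z (p.1 i)) with hHZ
  set HW : ℝ := ∑ p ∈ Ph, ∏ i, gammaDiag γ (what i) (zdot (p.1 i)) with hHW
  clear_value HZ HW
  have key : HZ - c * HW ≤ (c - 1) * N := by
    have hn' : (n:ℝ) ≠ 0 := ne_of_gt hn
    have hsub : γ - c = (γ - 1) * (((n:ℝ) - m) / n) := by
      rw [hcdef, ← mul_div_assoc, eq_div_iff hn', sub_mul, div_mul_cancel₀ _ hn']; ring
    have hsub2 : c - 1 = (γ - 1) * ((m:ℝ) / n) := by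
      rw [hcdef, ← mul_div_assoc, eq_div_iff hn', sub_mul, div_mul_cancel₀ _ hn']; ring
    have h2 : (γ - c) / q * T ≤ (c - 1) * N := by
      calc (γ - c) / q * T = (γ - 1) / n * (((n:ℝ) - m) / q * T) := by rw [hsub]; ring
        _ ≤ (γ - 1) / n * ((m:ℝ) * N) :=
            mul_le_mul_of_nonneg_left T_bound (div_nonneg (by linarith) hn.le)
        _ = (c - 1) * N := by rw [hsub2]; ring
    linarith [Hz_le]
  rw [hsplit z, hsplit zdot, ← e1, ← e2, hNa, ← hN, mul_add]
  have hcN : (c - 1) * N = c * N - N := by ring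
  linarith [key]
end

section
/- Let Z be a finite set with |Z| = D ≥ 2, let γ > 1 be real, let A be the γ-diagonal matrix on Z, and let 1 ≤ m ≤ n. Let a, b ∈ Z be distinct, let z = (b, a, a, …, a) ∈ Z^n, ż = (a, a, …, a) ∈ Z^n, and ŵ = (b, b, …, b) ∈ Z^m. Then the sampling-then-PRAM mechanism satisfies P(ŵ | z) = ((n + m(γ − 1))/n) · P(ŵ | ż), so the differential privacy bound ε = ln((n + m(γ − 1))/n) is tight. -/
open Finset

lemma card_theta (m n : ℕ) : (Theta m n).card = n.descFactorial m := by
  classical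
  rw [Theta, ← Fintype.card_subtype,
    Fintype.card_congr (Equiv.subtypeInjectiveEquivEmbedding (Fin m) (Fin n))]
  simp [Fintype.card_embedding_eq]

/-- Equivalence between injective maps avoiding `0` and embeddings into the complement. -/
def avoidEquiv (m n : ℕ) :
    {f : Fin m → Fin n // Function.Injective f ∧ ∀ i, (f i : ℕ) ≠ 0} ≃
      (Fin m ↪ {x : Fin n // (x : ℕ) ≠ 0}) where
  toFun f := ⟨fun i => ⟨f.1 i, f.2.2 i⟩, fun i j h => f.2.1 (congrArg Subtype.val h)⟩
  invFun g := ⟨fun i => (g i).1, fun i j h => g.injective (Subtype.ext h), fun i => (g i).2⟩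
  left_inv f := rfl
  right_inv g := rfl

lemma desc_key (m : ℕ) : ∀ n : ℕ, 1 ≤ n →
    n * ((n - 1).descFactorial m) = (n - m) * (n.descFactorial m)
  | 0, h => by omega
  | k + 1, _ => by
    simp only [Nat.add_sub_cancel]
    exact (Nat.succ_descFactorial k m).symm

lemma card_avoid (m n : ℕ) (hn : 1 ≤ n) :
    (Finset.univ.filter
        (fun π : Fin m → Fin n => Function.Injective π ∧ ∀ i, (π i : ℕ) ≠ 0)).card
      = (n - 1).descFactorial m := by
  classical
  haveI : NeZero n := ⟨by omega⟩
  have hcard : Fintype.card {x : Fin n // (x : ℕ) ≠ 0} = n - 1 := by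
    have h1 : Fintype.card {x : Fin n // (x : ℕ) = 0} = 1 := by
      simp_rw [show ∀ x : Fin n, ((x : ℕ) = 0 ↔ x = 0) from fun x => by
        rw [Fin.ext_iff, Fin.val_zero]]
      exact Fintype.card_subtype_eq (0 : Fin n)
    have := Fintype.card_subtype_compl (fun x : Fin n => (x : ℕ) = 0)
    simpa [h1] using this
  rw [← Fintype.card_subtype, Fintype.card_congr (avoidEquiv m n),
    Fintype.card_embedding_eq, hcard, Fintype.card_fin]

/-- The differential privacy bound `ε = ln((n + m(γ-1))/n)` is tight:
for `z = (b, a, …, a)`, `zdot = (a, …, a)`, and output `(b, …, b)`, the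
likelihood ratio equals exactly `(n + m(γ-1))/n`. -/
theorem sampling_pram_privacy_tight
    {Z : Type*} [Fintype Z] [DecidableEq Z] (hD : 2 ≤ Fintype.card Z)
    (γ : ℝ) (hγ : 1 < γ) (m n : ℕ) (hm : 1 ≤ m) (hmn : m ≤ n)
    (a b : Z) (hab : a ≠ b) :
    samplePRAM γ (fun _ : Fin m => b) (fun i : Fin n => if (i : ℕ) = 0 then b else a)
      = (((n : ℝ) + m * (γ - 1)) / n) * samplePRAM γ (fun _ : Fin m => b) (fun _ : Fin n => a) := by
  classical
  have hn : 1 ≤ n := hm.trans hmn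
  set q : ℝ := γ + (Fintype.card Z : ℝ) - 1 with hqdef
  have hq : 0 < q := by
    have : (2 : ℝ) ≤ (Fintype.card Z : ℝ) := by exact_mod_cast hD
    have := hγ
    unfold q; linarith
  have hbb : gammaDiag γ b b = γ / q := if_pos rfl
  have hba : gammaDiag γ b a = 1 / q := if_neg (Ne.symm hab)
  set T : ℕ := (Theta m n).card with hTdef
  have hT : T = n.descFactorial m := card_theta m n
  have hTpos : 0 < T := by
    rw [hT]
    rcases Nat.eq_zero_or_pos (n.descFactorial m) with h | h
    · exact absurd (Nat.descFactorial_eq_zero_iff_lt.mp h) (not_lt.mpr hmn)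
    · exact h
  set C : ℕ := ((Theta m n).filter (fun π => ∀ i, (π i : ℕ) ≠ 0)).card with hCdef
  have hC : C = (n - 1).descFactorial m := by
    rw [hCdef, Theta, Finset.filter_filter]
    exact card_avoid m n hn
  have hCle : C ≤ T := Finset.card_filter_le _ _
  -- key counting identity : n * C = (n - m) * T
  have hkey : n * C = (n - m) * T := by
    rw [hC, hT]; exact desc_key m n hn
  clear_value T C
  -- compute the product for injective π
  have hprod : ∀ π ∈ Theta m n,
      (∏ i, gammaDiag γ b ((fun i : Fin n => if (i : ℕ) = 0 then b else a) (π i)))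
        = (if (∀ i, (π i : ℕ) ≠ 0) then 1 else γ) * (1 / q) ^ m := by
    intro π hπ
    have hπinj : Function.Injective π := by
      simpa [Theta] using hπ
    have hfac : ∀ i : Fin m, gammaDiag γ b (if ((π i : ℕ)) = 0 then b else a)
        = (if ((π i : ℕ)) = 0 then γ else 1) * (1 / q) := by
      intro i
      by_cases h : ((π i : ℕ)) = 0
      · rw [if_pos h, if_pos h, hbb, mul_one_div]
      · rw [if_neg h, if_neg h, hba, one_mul]
    calc (∏ i, gammaDiag γ b ((fun i : Fin n => if (i : ℕ) = 0 then b else a) (π i)))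
        = ∏ i, ((if ((π i : ℕ)) = 0 then γ else 1) * (1 / q)) := by
          exact Finset.prod_congr rfl (fun i _ => hfac i)
      _ = (∏ i, (if ((π i : ℕ)) = 0 then γ else 1)) * (1 / q) ^ m := by
          rw [Finset.prod_mul_distrib, Finset.prod_const, Finset.card_univ, Fintype.card_fin]
      _ = (if (∀ i, (π i : ℕ) ≠ 0) then 1 else γ) * (1 / q) ^ m := by
          congr 1
          by_cases h : ∀ i, (π i : ℕ) ≠ 0
          · simp [h]
          · push_neg at h
            obtain ⟨i₀, hi₀⟩ := h
            rw [if_neg (by push_neg; exact ⟨i₀, hi₀⟩)]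
            rw [Finset.prod_eq_single_of_mem i₀ (Finset.mem_univ _)]
            · simp [hi₀]
            · intro j _ hj
              have : (π j : ℕ) ≠ 0 := by
                intro h0
                exact hj (hπinj (Fin.ext (h0.trans hi₀.symm)))
              simp [this]
  -- the two sums
  have hsum1 : (∑ π ∈ Theta m n,
      ∏ i, gammaDiag γ b ((fun i : Fin n => if (i : ℕ) = 0 then b else a) (π i)))
      = ((C : ℝ) + ((T : ℝ) - C) * γ) * (1 / q) ^ m := by
    rw [Finset.sum_congr rfl hprod, ← Finset.sum_mul]
    congr 1
    rw [Finset.sum_ite, Finset.sum_const, Finset.sum_const]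
    have hsplit : ((Theta m n).filter (fun π => ¬ ∀ i, (π i : ℕ) ≠ 0)).card = T - C := by
      have h2 := Finset.card_filter_add_card_filter_not
        (s := Theta m n) (p := fun π => ∀ i, (π i : ℕ) ≠ 0)
      rw [← hCdef, ← hTdef] at h2
      rw [← h2, Nat.add_sub_cancel_left]
    rw [hsplit, ← hCdef, nsmul_eq_mul, nsmul_eq_mul, Nat.cast_sub hCle]
    ring
  have hsum2 : (∑ π ∈ Theta m n, ∏ i, gammaDiag γ b ((fun _ : Fin n => a) (π i)))
      = (T : ℝ) * (1 / q) ^ m := by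
    rw [Finset.sum_congr rfl (fun π _ => by
      rw [Finset.prod_congr rfl (fun i _ => hba), Finset.prod_const, Finset.card_univ,
        Fintype.card_fin])]
    rw [Finset.sum_const, nsmul_eq_mul, ← hTdef]
  rw [samplePRAM, samplePRAM, hsum1, hsum2, ← hTdef]
  have hnR : (n : ℝ) ≠ 0 := Nat.cast_ne_zero.mpr (Nat.one_le_iff_ne_zero.mp hn)
  have hkeyR : (n : ℝ) * C = ((n : ℝ) - m) * T := by
    have := congrArg (fun x : ℕ => (x : ℝ)) hkey
    push_cast [Nat.cast_sub hmn] at this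
    exact this
  have key2 : ((C : ℝ) + ((T : ℝ) - C) * γ) = (T : ℝ) * (((n : ℝ) + m * (γ - 1)) / n) := by
    field_simp
    linear_combination (1 - γ) * hkeyR
  rw [key2]; ring
end

section
/- Let 1 ≤ m ≤ n and fix k ∈ {1,…,n}. Let Θ be the set of injective m-tuples with entries in {1,…,n}, let Θ_k be the subset of tuples that contain k as an entry, and let Θ_k^c = Θ \ Θ_k. For π ∈ Θ_k define Θ_k(π) = {π' ∈ Θ_k^c : d_H(π, π') = 1}, where d_H is Hamming distance between tuples. Then every σ ∈ Θ_k^c belongs to Θ_k(π) for exactly m distinct tuples π ∈ Θ_k. -/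
open Finset

lemma hamming_diff_set {m n : ℕ} (x y : Fin m → Fin n) :
    hammingDist x y = (Finset.univ.filter fun i => x i ≠ y i).card := rfl

/-- Every sampling `σ ∈ Θ_k^c` (an injective tuple avoiding location `k`) belongs to
`Θ_k(π) = {π' ∈ Θ_k^c : d_H(π, π') = 1}` for exactly `m` distinct tuples `π ∈ Θ_k`
(injective tuples selecting location `k`). -/
theorem mem_Theta_k_of_exactly_m_tuples
    (m n : ℕ) (hm : 1 ≤ m) (hmn : m ≤ n) (k : Fin n)
    (σ : Fin m → Fin n) (hσ : σ ∈ Theta m n) (hσk : ∀ i, σ i ≠ k) :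
    ((Theta m n).filter (fun π => (∃ i, π i = k) ∧ hammingDist π σ = 1)).card = m := by
  classical
  have hσinj : Function.Injective σ := by
    simpa [Theta] using hσ
  have key : (Theta m n).filter (fun π => (∃ i, π i = k) ∧ hammingDist π σ = 1)
      = Finset.image (fun i => Function.update σ i k) Finset.univ := by
    ext π
    simp only [Finset.mem_filter, Finset.mem_image, Finset.mem_univ, true_and, Theta]
    constructor
    · rintro ⟨hinj, ⟨j, hj⟩, hd⟩
      refine ⟨j, ?_⟩
      have hjd : j ∈ Finset.univ.filter fun i => π i ≠ σ i := by
        simp only [Finset.mem_filter, Finset.mem_univ, true_and]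
        rw [hj]; exact fun h => hσk j h.symm
      have hset : (Finset.univ.filter fun i => π i ≠ σ i) = {j} := by
        apply Finset.eq_singleton_iff_unique_mem.mpr
        refine ⟨hjd, fun x hx => ?_⟩
        by_contra hxj
        have h2 : 2 ≤ (Finset.univ.filter fun i => π i ≠ σ i).card := by
          have : ({x, j} : Finset (Fin m)) ⊆ Finset.univ.filter fun i => π i ≠ σ i := by
            intro y hy
            rcases Finset.mem_insert.mp hy with rfl | hy
            · exact hx
            · rw [Finset.mem_singleton] at hy; subst hy; exact hjd
          calc 2 = ({x, j} : Finset (Fin m)).card := by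
                  rw [Finset.card_insert_of_notMem (by simpa using hxj), Finset.card_singleton]
            _ ≤ _ := Finset.card_le_card this
        rw [hamming_diff_set] at hd
        omega
      funext i
      by_cases hij : i = j
      · subst hij; simp [Function.update_self, hj]
      · have : i ∉ (Finset.univ.filter fun i => π i ≠ σ i) := by
          rw [hset]; simpa using hij
        simp only [Finset.mem_filter, Finset.mem_univ, true_and, not_not] at this
        rw [Function.update_of_ne hij, ← this]
    · rintro ⟨j, rfl⟩
      refine ⟨?_, ⟨j, by simp⟩, ?_⟩
      · intro a b hab
        by_cases haj : a = j <;> by_cases hbj : b = j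
        · rw [haj, hbj]
        · rw [haj] at hab ⊢
          simp only [Function.update_self, Function.update_of_ne hbj] at hab
          exact absurd hab.symm (hσk b)
        · rw [hbj] at hab ⊢
          simp only [Function.update_self, Function.update_of_ne haj] at hab
          exact absurd hab (hσk a)
        · simp only [Function.update_of_ne haj, Function.update_of_ne hbj] at hab
          exact hσinj hab
      · rw [hamming_diff_set]
        have : (Finset.univ.filter fun i => Function.update σ j k i ≠ σ i) = {j} := by
          ext x
          simp only [Finset.mem_filter, Finset.mem_univ, true_and, Finset.mem_singleton]
          constructor
          · intro hx
            by_contra hxj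
            rw [Function.update_of_ne hxj] at hx
            exact hx rfl
          · rintro rfl
            rw [Function.update_self]
            exact fun h => hσk _ h.symm
        rw [this, Finset.card_singleton]
  rw [key, Finset.card_image_of_injective _ ?_, Finset.card_univ, Fintype.card_fin]
  intro i j hij
  by_contra hne
  have h2 : Function.update σ i k i = Function.update σ j k i := congrFun hij i
  rw [Function.update_self, Function.update_of_ne hne] at h2
  exact hσk i h2.symm
end

section
/- Let G be a finite additive abelian group with |G| = D ≥ 1 and let γ > 1 be real, with A the γ-diagonal matrix on G. Fix z ∈ G. Let V be uniformly distributed on G, and given V = v, let W ∈ G be distributed with probability P(W = w | V = v) = A[w, z + v]. Then the decrypted output W − V is distributed according to P(W − V = ŵ) = A[ŵ, z]; i.e., one-time-pad encryption commutes with γ-diagonal PRAM perturbation. -/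
open Finset

/-- One-time-pad encryption commutes with γ-diagonal PRAM perturbation:
if `V` is uniform on a finite abelian group `G`, and given `V = v` the symbol `W`
is distributed as `A[·, z + v]` (PRAM applied to the encrypted symbol `z + v`),
then the decrypted output `W - V` is distributed as `A[·, z]`. -/
theorem otp_commutes_with_pram
    {G : Type*} [AddCommGroup G] [Fintype G] [DecidableEq G]
    (hD : 1 ≤ Fintype.card G) (γ : ℝ) (hγ : 1 < γ) (z what : G) :
    ∑ v : G, (1 / (Fintype.card G : ℝ)) * gammaDiag γ (what + v) (z + v)
      = gammaDiag γ what z := by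
  have hc : (Fintype.card G : ℝ) ≠ 0 := by positivity
  have h : ∀ v : G, gammaDiag γ (what + v) (z + v) = gammaDiag γ what z := by
    intro v
    unfold gammaDiag
    simp [add_left_inj]
  simp only [h]
  rw [Finset.sum_const, card_univ, nsmul_eq_mul]
  field_simp
end

section
/- Let Z be a finite set, 1 ≤ m ≤ n, and z ∈ Z^n. Let (I_1,…,I_m) be a uniformly random injective m-tuple with entries in {1,…,n}, and let z̃ = (z_{I_1},…,z_{I_m}). Then the expected ℓ2-norm sampling error of the type satisfies E‖T_{z̃} − T_z‖₂ ≤ 1/√m. -/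
/-!
By Cauchy–Schwarz it suffices to show `E ‖T_z̃ - T_z‖₂² ≤ 1 / m`. Coordinatewise,
`m (T_z̃ a - T_z a) = ∑ j, f (π j)` for the centred indicator `f i = 1[z i = a] - T_z a`,
which sums to zero. By invariance of the uniform injective tuple under permutations of `Fin n`,
each `π j` is uniform on `Fin n` and each pair `(π j, π k)`, `j ≠ k`, is uniform on the
off-diagonal, where `∑ f i * f i' = (∑ f)² - ∑ f² ≤ 0`. So the cross terms are
nonpositive (sampling without replacement is negatively correlated) and
`E (∑ j, f (π j))² ≤ (m / n) ∑ f²`.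
Finally `∑ a, ∑ i, f i ² ≤ ∑ a, ∑ i, 1[z i = a] = n`.
-/

open Finset

/-- The type (empirical distribution) of a sequence `z ∈ Z^n`. -/
noncomputable def typeOf {Z : Type*} [DecidableEq Z] {n : ℕ} (z : Fin n → Z) : Z → ℝ :=
  fun a => ((Finset.univ.filter fun i => z i = a).card : ℝ) / n

open Equiv

namespace Finset

variable {α β ι R : Type*}

lemma exists_sum_comp_eq_nsmul_sum {M : Type*} [AddCommMonoid M] [DecidableEq β]
    {s : Finset α} {t : Finset β} {f : α → β} (hf : ∀ x ∈ s, f x ∈ t)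
    (hc : ∀ b ∈ t, ∀ b' ∈ t, #{x ∈ s | f x = b} = #{x ∈ s | f x = b'}) :
    ∃ c : ℕ, ∀ F : β → M, ∑ x ∈ s, F (f x) = c • ∑ b ∈ t, F b := by
  rcases t.eq_empty_or_nonempty with rfl | ⟨b₀, hb₀⟩
  · have : s = ∅ := eq_empty_of_forall_notMem fun x hx => notMem_empty _ (hf x hx)
    exact ⟨0, fun F => by simp [this]⟩
  refine ⟨#{x ∈ s | f x = b₀}, fun F => ?_⟩
  rw [← sum_fiberwise_of_maps_to hf, smul_sum]
  refine sum_congr rfl fun b hb => ?_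
  rw [← hc b hb b₀ hb₀, ← sum_const]
  exact sum_congr rfl fun x hx => by rw [(mem_filter.1 hx).2]

lemma sum_offDiag_mul [CommRing R] [DecidableEq ι] (s : Finset ι) (f : ι → R) :
    ∑ p ∈ s.offDiag, f p.1 * f p.2 = (∑ i ∈ s, f i) ^ 2 - ∑ i ∈ s, f i ^ 2 := by
  have hsplit := sum_union (disjoint_diag_offDiag s) (f := fun p => f p.1 * f p.2)
  rw [diag_union_offDiag, sum_product, sum_diag] at hsplit
  rw [sq, sum_mul_sum, hsplit]
  simp [sq]

lemma sum_sq_le_sum_add_sq [Fintype ι] (f : ι → ℝ) (hf : ∑ i, f i = 0) (c : ℝ) :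
    ∑ i, f i ^ 2 ≤ ∑ i, (f i + c) ^ 2 := by
  simp_rw [add_sq]
  rw [sum_add_distrib, sum_add_distrib, ← sum_mul, ← mul_sum, hf]
  simp only [mul_zero, zero_mul, add_zero, sum_const, card_univ, nsmul_eq_mul]
  have : 0 ≤ (Fintype.card ι : ℝ) * c ^ 2 := by positivity
  linarith

end Finset

lemma Real.sum_sqrt_le_sqrt_card_mul_sum {ι : Type*} (s : Finset ι) {f : ι → ℝ}
    (hf : ∀ i, 0 ≤ f i) : ∑ i ∈ s, √(f i) ≤ √(#s * ∑ i ∈ s, f i) := by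
  simpa [Real.sqrt_mul (Nat.cast_nonneg _)] using
    Real.sum_sqrt_mul_sqrt_le s (fun _ => zero_le_one) hf

lemma Equiv.Perm.exists_apply_eq_and_apply_eq {α : Type*} [DecidableEq α] {i i' u u' : α}
    (hi : i ≠ i') (hu : u ≠ u') : ∃ σ : Perm α, σ i = u ∧ σ i' = u' := by
  have hi' : swap i u i' ≠ u := by
    simpa using (swap i u).injective.ne hi.symm
  exact ⟨(swap i u).trans (swap (swap i u i') u'),
    by simp [swap_apply_of_ne_of_ne hi'.symm hu], by simp⟩

namespace Theta

variable {m n : ℕ}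

lemma mem_iff {π : Fin m → Fin n} : π ∈ Theta m n ↔ Function.Injective π := by
  simp [Theta]

lemma card_filter_perm_comp (σ : Perm (Fin n)) (P : (Fin m → Fin n) → Prop) [DecidablePred P] :
    #{π ∈ Theta m n | P (σ ∘ π)} = #{π ∈ Theta m n | P π} := by
  refine card_nbij' (σ ∘ ·) (σ.symm ∘ ·) ?_ ?_ ?_ ?_ <;> intro π hπ
  · simp only [coe_filter, mem_iff, Set.mem_ofPred_eq] at hπ ⊢
    exact ⟨σ.injective.comp hπ.1, hπ.2⟩
  · simp only [coe_filter, mem_iff, Set.mem_ofPred_eq] at hπ ⊢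
    refine ⟨σ.symm.injective.comp hπ.1, ?_⟩
    simpa [← Function.comp_assoc] using hπ.2
  · simp [← Function.comp_assoc]
  · simp [← Function.comp_assoc]

lemma card_filter_apply_eq (j : Fin m) (i i' : Fin n) :
    #{π ∈ Theta m n | π j = i} = #{π ∈ Theta m n | π j = i'} := by
  rw [← card_filter_perm_comp (swap i i')]
  simp [swap_apply_eq_iff]

lemma card_filter_apply_pair_eq (j k : Fin m) {p q : Fin n × Fin n}
    (hp : p.1 ≠ p.2) (hq : q.1 ≠ q.2) :
    #{π ∈ Theta m n | (π j, π k) = p} = #{π ∈ Theta m n | (π j, π k) = q} := by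
  obtain ⟨σ, h1, h2⟩ := Perm.exists_apply_eq_and_apply_eq hp hq
  rw [← card_filter_perm_comp σ fun π => (π j, π k) = q]
  simp only [Function.comp_apply, Prod.ext_iff, ← h1, ← h2, σ.injective.eq_iff]

lemma card_mul_sum_apply (j : Fin m) (g : Fin n → ℝ) :
    n * ∑ π ∈ Theta m n, g (π j) = #(Theta m n) * ∑ i, g i := by
  obtain ⟨c, hc⟩ := exists_sum_comp_eq_nsmul_sum (M := ℝ) (s := Theta m n) (t := univ)
    (f := fun π => π j) (fun _ _ => mem_univ _) fun i _ i' _ => card_filter_apply_eq j i i'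
  have hcard := hc fun _ => 1
  simp only [sum_const, card_univ, Fintype.card_fin, nsmul_eq_mul, mul_one] at hcard
  rw [hc g, hcard, nsmul_eq_mul]
  ring

lemma sum_apply_mul_apply_nonpos {j k : Fin m} (hjk : j ≠ k) (f : Fin n → ℝ)
    (hf : ∑ i, f i = 0) : ∑ π ∈ Theta m n, f (π j) * f (π k) ≤ 0 := by
  obtain ⟨c, hc⟩ := exists_sum_comp_eq_nsmul_sum (M := ℝ) (s := Theta m n)
    (t := univ.offDiag) (f := fun π => (π j, π k))
    (fun π hπ => by simpa using (mem_iff.1 hπ).ne hjk)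
    fun p hp q hq => card_filter_apply_pair_eq j k (mem_offDiag.1 hp).2.2 (mem_offDiag.1 hq).2.2
  rw [hc fun p => f p.1 * f p.2, sum_offDiag_mul, hf, nsmul_eq_mul]
  have : 0 ≤ ∑ i, f i ^ 2 := sum_nonneg fun i _ => sq_nonneg _
  nlinarith [c.cast_nonneg (α := ℝ)]

theorem card_mul_sum_sq_le (f : Fin n → ℝ) (hf : ∑ i, f i = 0) :
    n * ∑ π ∈ Theta m n, (∑ j, f (π j)) ^ 2 ≤ m * #(Theta m n) * ∑ i, f i ^ 2 := by
  have hdiag (j : Fin m) : ∑ k, ∑ π ∈ Theta m n, f (π j) * f (π k)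
      ≤ ∑ π ∈ Theta m n, f (π j) ^ 2 := by
    rw [← add_sum_erase _ _ (mem_univ j)]
    simp only [sq]
    exact add_le_of_nonpos_right
      (sum_nonpos fun k hk => sum_apply_mul_apply_nonpos (ne_of_mem_erase hk).symm f hf)
  calc n * ∑ π ∈ Theta m n, (∑ j, f (π j)) ^ 2
      = n * ∑ j, ∑ k, ∑ π ∈ Theta m n, f (π j) * f (π k) := by
        simp_rw [sq, sum_mul_sum]
        rw [sum_comm]
        simp_rw [sum_comm (s := Theta m n) (t := univ)]
    _ ≤ ∑ j : Fin m, n * ∑ π ∈ Theta m n, f (π j) ^ 2 := by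
        rw [mul_sum]; gcongr with j; exact hdiag j
    _ = m * #(Theta m n) * ∑ i, f i ^ 2 := by
        rw [sum_congr rfl fun j _ => card_mul_sum_apply j fun i => f i ^ 2]
        simp [mul_assoc]

end Theta

section SamplingError

variable {Z : Type*} [DecidableEq Z] {m n : ℕ}

lemma typeOf_apply_eq_sum (z : Fin n → Z) (a : Z) :
    typeOf z a = (∑ i, if z i = a then 1 else 0) / n := by
  rw [typeOf, natCast_card_filter]

lemma sum_indicator_sub_typeOf (z : Fin n → Z) (a : Z) :
    ∑ i, ((if z i = a then 1 else 0) - typeOf z a) = 0 := by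
  rcases n.eq_zero_or_pos with rfl | hn
  · simp
  rw [sum_sub_distrib, sum_const, card_univ, Fintype.card_fin, nsmul_eq_mul,
    typeOf_apply_eq_sum]
  field_simp
  ring

lemma typeOf_comp_sub_typeOf (hm : m ≠ 0) (z : Fin n → Z) (π : Fin m → Fin n) (a : Z) :
    typeOf (fun j => z (π j)) a - typeOf z a
      = (∑ j, ((if z (π j) = a then 1 else 0) - typeOf z a)) / m := by
  rw [sum_sub_distrib, sum_const, card_univ, Fintype.card_fin, nsmul_eq_mul,
    typeOf_apply_eq_sum (fun j => z (π j))]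
  field_simp

theorem sum_sum_sq_typeOf_comp_sub_le [Fintype Z] (hm : m ≠ 0) (z : Fin n → Z) :
    ∑ π ∈ Theta m n, ∑ a, (typeOf (fun j => z (π j)) a - typeOf z a) ^ 2
      ≤ #(Theta m n) / m := by
  rcases n.eq_zero_or_pos with rfl | hn
  · have : NeZero m := ⟨hm⟩
    simp [Theta]
  set f : Z → Fin n → ℝ := fun a i => (if z i = a then 1 else 0) - typeOf z a
  set E := ∑ π ∈ Theta m n, ∑ a, (typeOf (fun j => z (π j)) a - typeOf z a) ^ 2
  have hm' : (0 : ℝ) < m := by positivity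
  have key : (n * m) * (E * m) ≤ (n * m) * #(Theta m n) := calc
    (n * m) * (E * m) = ∑ a, n * ∑ π ∈ Theta m n, (∑ j, f a (π j)) ^ 2 := by
        simp_rw [E, typeOf_comp_sub_typeOf hm, div_pow, sum_mul, mul_sum]
        rw [sum_comm]
        refine sum_congr rfl fun a _ => sum_congr rfl fun π _ => ?_
        field_simp
        rfl
    _ ≤ ∑ a, m * #(Theta m n) * ∑ i, f a i ^ 2 :=
        sum_le_sum fun a _ => Theta.card_mul_sum_sq_le _ (sum_indicator_sub_typeOf z a)
    _ ≤ ∑ a, m * #(Theta m n) * ∑ i, (f a i + typeOf z a) ^ 2 := by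
        refine sum_le_sum fun a _ => mul_le_mul_of_nonneg_left ?_ (by positivity)
        exact sum_sq_le_sum_add_sq _ (sum_indicator_sub_typeOf z a) _
    _ = (n * m) * #(Theta m n) := by
        simp only [f, sub_add_cancel, ite_pow, one_pow, ne_eq, OfNat.ofNat_ne_zero,
          not_false_eq_true, zero_pow, ← mul_sum]
        rw [sum_comm]
        simp only [sum_ite_eq, mem_univ, ↓reduceIte, sum_const, card_univ, Fintype.card_fin,
          nsmul_eq_mul, mul_one]
        ring
  rw [le_div_iff₀ hm']
  exact le_of_mul_le_mul_left key (by positivity)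

end SamplingError

theorem expected_sampling_error_le_general
    {Z : Type*} [Fintype Z] [DecidableEq Z] (m n : ℕ) (hm : 1 ≤ m)
    (z : Fin n → Z) :
    (1 / ((Theta m n).card : ℝ)) * ∑ π ∈ Theta m n,
        Real.sqrt (∑ a : Z, (typeOf (fun i => z (π i)) a - typeOf z a) ^ 2)
      ≤ 1 / Real.sqrt m := by
  rcases (Theta m n).eq_empty_or_nonempty with hΘ | hΘ
  · simp [hΘ]
  set N : ℝ := (#(Theta m n) : ℝ)
  have hN : 0 < N := by positivity
  have hCS := Real.sum_sqrt_le_sqrt_card_mul_sum (Theta m n) fun π =>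
    (univ : Finset Z).sum_nonneg fun a _ => sq_nonneg (typeOf (fun i => z (π i)) a - typeOf z a)
  calc _ ≤ 1 / N * √(N * (N / m)) := by
        gcongr
        exact hCS.trans <| Real.sqrt_le_sqrt <| by
          gcongr; exact sum_sum_sq_typeOf_comp_sub_le (by omega) z
    _ = 1 / √m := by
        rw [← mul_div_assoc, Real.sqrt_div' _ (Nat.cast_nonneg m), Real.sqrt_mul_self hN.le]
        field_simp

/-- The expected ℓ2-norm error of the sampled type under uniform sampling
without replacement is at most `1/√m`. -/
theorem expected_sampling_error_le
    {Z : Type*} [Fintype Z] [DecidableEq Z] (m n : ℕ) (hm : 1 ≤ m) (hmn : m ≤ n)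
    (z : Fin n → Z) :
    (1 / ((Theta m n).card : ℝ)) * ∑ π ∈ Theta m n,
        Real.sqrt (∑ a : Z, (typeOf (fun i => z (π i)) a - typeOf z a) ^ 2)
      ≤ 1 / Real.sqrt m :=
  expected_sampling_error_le_general m n hm z
end
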